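/- Fix β > 0 and a constant p ∈ (0,1]. Then log E[e^{-βH(σ)}] = (1-p)β²/(8p) + (β/(2N))|σ|² + O(1/N²)·(|σ|²/N + 1), where the O(1/N²)-term is uniform over σ ∈ {-1,+1}^N; i.e., there is a constant C such that for all sufficiently large N and all σ ∈ {-1,+1}^N, | log E[e^{-βH(σ)}] - (1-p)β²/(8p) - (β/(2N))|σ|² | ≤ (C/N²)(|σ|²/N + 1). -/

import Mathlib

open MeasureTheory ProbabilityTheory Filter
open scoped Classical

noncomputable section

/-- The spin value `±1` associated to a Boolean. -/
def spin (b : Bool) : ℝ := if b then 1 else -1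

/-- The total magnetization `|σ| = σ₁ + ⋯ + σ_N` of a spin configuration. -/
def mag {N : ℕ} (σ : Fin N → Bool) : ℝ := ∑ i, spin (σ i)

/-- The overlap `|στ| = ∑ σᵢτᵢ` of two spin configurations. -/
def magPair {N : ℕ} (σ τ : Fin N → Bool) : ℝ := ∑ i, spin (σ i) * spin (τ i)

/-- The Hamiltonian `H(σ) = -(1/(2Np)) ∑_{i,j} ε_{i,j} σᵢ σⱼ` of the Ising model on the
directed Erdős–Rényi graph with edge indicators `ε`. -/
def hamil (N : ℕ) (p : ℝ) (ε : Fin N × Fin N → Bool) (σ : Fin N → Bool) : ℝ :=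
  -(1 / (2 * N * p)) * ∑ i : Fin N, ∑ j : Fin N,
    (if ε (i, j) then (1 : ℝ) else 0) * spin (σ i) * spin (σ j)

/-- The joint law of the i.i.d. Bernoulli(p) edge indicators `(ε_{i,j})_{i,j=1}^N`. -/
def bern (N : ℕ) (p : ℝ) : Measure (Fin N × Fin N → Bool) :=
  Measure.pi fun _ => (PMF.bernoulli (min 1 (Real.toNNReal p)) (min_le_left _ _)).toMeasure

/-- The generalized partition function `Z_N(β, g) = ∑_σ e^{-βH(σ)} g(|σ|/√N)`. -/
def ZNg (N : ℕ) (p β : ℝ) (g : ℝ → ℝ) (ε : Fin N × Fin N → Bool) : ℝ :=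
  ∑ σ : Fin N → Bool, Real.exp (-β * hamil N p ε σ) * g (mag σ / Real.sqrt N)

/-- The expectation `𝔼 Z_N(β, g)` over the randomness of the graph. -/
def EZNg (N : ℕ) (p β : ℝ) (g : ℝ → ℝ) : ℝ :=
  ∫ ε, ZNg N p β g ε ∂(bern N p)

/-- The Gaussian expectation `𝔼_ξ [g(ξ) e^{β ξ²/2}]` for a standard normal `ξ`. -/
def gaussExp (β : ℝ) (g : ℝ → ℝ) : ℝ :=
  ∫ x, g x * Real.exp (β * x ^ 2 / 2) ∂(gaussianReal 0 1)

/-!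
The expectation factorizes over the `N²` independent edges:
`𝔼 e^{-βH(σ)} = ∏_{i,j} (1 - p + p e^{a σᵢσⱼ})` with `a = β/(2Np)`. As `σᵢσⱼ = ±1` and
`∑_{i,j} σᵢσⱼ = |σ|²`, the logarithm is `N²` times the even part of the Bernoulli cumulant
generating function `L(x) = log (1 - p + p eˣ)` at `a`, plus `|σ|²` times its odd part.
The even part is `p(1-p)a²/2 + O(a⁴)`, because
`L(x) + L(-x) = log (1 + 2p(1-p)(cosh x - 1))`, and the odd part is `pa + O(a³)`;
with `a = O(1/N)` the errors are `O(1/N²)` and `O(|σ|²/N³)`.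
-/

open Real

lemma abs_log_one_add_sub_self_le {t : ℝ} (ht : -(1 / 2) ≤ t) :
    |log (1 + t) - t| ≤ 2 * t ^ 2 := by
  have hpos : 0 < 1 + t := by linarith
  have hupper : log (1 + t) ≤ t := by linarith [log_le_sub_one_of_pos hpos]
  have hlower : t / (1 + t) ≤ log (1 + t) := by
    have h := one_sub_inv_le_log_of_pos hpos
    rwa [show 1 - (1 + t)⁻¹ = t / (1 + t) by field_simp; ring] at h
  have hgap : t - t / (1 + t) ≤ 2 * t ^ 2 := by
    rw [sub_div' hpos.ne', div_le_iff₀ hpos]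
    nlinarith
  rw [abs_le]
  constructor <;> nlinarith [sq_nonneg t]

lemma abs_exp_sub_quadratic_le {x : ℝ} (hx : |x| ≤ 1) :
    |exp x - (1 + x + x ^ 2 / 2)| ≤ |x| ^ 3 := by
  have h := Real.exp_bound hx (n := 3) (by norm_num)
  norm_num [Finset.sum_range_succ, Nat.factorial] at h
  calc |exp x - (1 + x + x ^ 2 / 2)| ≤ |x| ^ 3 * (2 / 9) := by convert h using 2
    _ ≤ |x| ^ 3 := by nlinarith [pow_nonneg (abs_nonneg x) 3]

lemma abs_cosh_sub_one_sub_sq_div_two_le {x : ℝ} (hx : |x| ≤ 1) :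
    |cosh x - 1 - x ^ 2 / 2| ≤ x ^ 4 := by
  have hpos := Real.exp_bound hx (n := 4) (by norm_num)
  have hneg := Real.exp_bound (x := -x) (by rwa [abs_neg]) (n := 4) (by norm_num)
  have h4 : |x| ^ 4 = x ^ 4 := by rw [← abs_pow, abs_of_nonneg (by positivity)]
  rw [abs_neg, h4] at hneg
  rw [h4] at hpos
  norm_num [Finset.sum_range_succ, Nat.factorial] at hpos hneg
  rw [cosh_eq]
  rw [abs_le] at hpos hneg ⊢
  constructor <;> nlinarith

lemma one_sub_add_mul_exp_pos {p : ℝ} (hp0 : 0 ≤ p) (hp1 : p ≤ 1) (x : ℝ) :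
    0 < 1 - p + p * exp x := by
  rcases hp0.eq_or_lt with rfl | hp
  · norm_num
  · nlinarith [mul_pos hp (exp_pos x)]

def bernoulliCgf (p x : ℝ) : ℝ := log (1 - p + p * exp x)

section bernoulliCgf

variable {p : ℝ}

lemma bernoulliCgf_add_bernoulliCgf_neg (hp0 : 0 ≤ p) (hp1 : p ≤ 1) (x : ℝ) :
    bernoulliCgf p x + bernoulliCgf p (-x) = log (1 + 2 * p * (1 - p) * (cosh x - 1)) := by
  have hinv : exp x * exp (-x) = 1 := by rw [← exp_add, add_neg_cancel, exp_zero]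
  rw [bernoulliCgf, bernoulliCgf, ← log_mul (one_sub_add_mul_exp_pos hp0 hp1 x).ne'
    (one_sub_add_mul_exp_pos hp0 hp1 (-x)).ne', cosh_eq]
  congr 1
  linear_combination p ^ 2 * hinv

lemma abs_bernoulliCgf_add_bernoulliCgf_neg_sub_le {x : ℝ} (hp0 : 0 ≤ p) (hp1 : p ≤ 1)
    (hx : |x| ≤ 1) :
    |bernoulliCgf p x + bernoulliCgf p (-x) - p * (1 - p) * x ^ 2| ≤ 2 * x ^ 4 := by
  rw [bernoulliCgf_add_bernoulliCgf_neg hp0 hp1]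
  set q := 2 * p * (1 - p)
  set u := cosh x - 1
  have hq0 : 0 ≤ q := mul_nonneg (by positivity) (sub_nonneg.2 hp1)
  have hq : q ≤ 1 / 2 := by nlinarith [sq_nonneg (2 * p - 1)]
  have hu0 : 0 ≤ u := sub_nonneg.2 (one_le_cosh x)
  have hu := abs_le.1 (abs_cosh_sub_one_sub_sq_div_two_le hx)
  have hx2 : x ^ 2 ≤ 1 := by nlinarith [sq_abs x, abs_nonneg x]
  have hx4 : x ^ 4 ≤ x ^ 2 := by nlinarith
  have hqu0 : 0 ≤ q * u := mul_nonneg hq0 hu0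
  have hqu : q * u ≤ 3 / 4 * x ^ 2 := by nlinarith
  have hlog := abs_le.1 (abs_log_one_add_sub_self_le (t := q * u) (by linarith))
  rw [abs_le]
  constructor <;> nlinarith

lemma abs_centered_bernoulli_mgf_sub_le {x : ℝ} (hp0 : 0 ≤ p) (hp1 : p ≤ 1) (hx : |x| ≤ 1) :
    |(1 - p) * exp (-(p * x)) + p * exp ((1 - p) * x) - (1 + p * (1 - p) * x ^ 2 / 2)|
      ≤ |x| ^ 3 := by
  have hq0 : 0 ≤ 1 - p := sub_nonneg.2 hp1
  have habs₁ : |-(p * x)| = p * |x| := by rw [abs_neg, abs_mul, abs_of_nonneg hp0]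
  have habs₂ : |(1 - p) * x| = (1 - p) * |x| := by rw [abs_mul, abs_of_nonneg hq0]
  have h₁ := abs_exp_sub_quadratic_le (x := -(p * x))
    (by rw [habs₁]; nlinarith [abs_nonneg x])
  have h₂ := abs_exp_sub_quadratic_le (x := (1 - p) * x)
    (by rw [habs₂]; nlinarith [abs_nonneg x])
  rw [habs₁] at h₁
  rw [habs₂] at h₂
  calc _ = |(1 - p) * (exp (-(p * x)) - (1 + -(p * x) + (-(p * x)) ^ 2 / 2))
          + p * (exp ((1 - p) * x) - (1 + (1 - p) * x + ((1 - p) * x) ^ 2 / 2))| := by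
        congr 1; ring
    _ ≤ (1 - p) * (p * |x|) ^ 3 + p * ((1 - p) * |x|) ^ 3 := by
        refine (abs_add_le _ _).trans ?_
        rw [abs_mul, abs_mul, abs_of_nonneg hq0, abs_of_nonneg hp0]
        gcongr
    _ = p * (1 - p) * (p ^ 2 + (1 - p) ^ 2) * |x| ^ 3 := by ring
    _ ≤ 1 * |x| ^ 3 := by
        gcongr
        nlinarith [mul_nonneg hp0 hq0]
    _ = |x| ^ 3 := one_mul _

lemma bernoulliCgf_sub_mul_self (hp0 : 0 ≤ p) (hp1 : p ≤ 1) (x : ℝ) :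
    bernoulliCgf p x - p * x = log ((1 - p) * exp (-(p * x)) + p * exp ((1 - p) * x)) := by
  have hfactor : (1 - p) * exp (-(p * x)) + p * exp ((1 - p) * x)
      = (1 - p + p * exp x) * exp (-(p * x)) := by
    rw [show (1 - p) * x = x + -(p * x) by ring, exp_add]
    ring
  rw [hfactor, log_mul (one_sub_add_mul_exp_pos hp0 hp1 x).ne' (exp_pos _).ne', log_exp,
    bernoulliCgf]
  ring

lemma abs_bernoulliCgf_sub_taylor_le {x : ℝ} (hp0 : 0 ≤ p) (hp1 : p ≤ 1)
    (hx : |x| ≤ 1 / 2) :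
    |bernoulliCgf p x - p * x - p * (1 - p) * x ^ 2 / 2| ≤ 2 * |x| ^ 3 := by
  rw [bernoulliCgf_sub_mul_self hp0 hp1]
  have hy := abs_le.1 (abs_centered_bernoulli_mgf_sub_le hp0 hp1 (x := x) (by linarith))
  rw [← sq_abs x] at hy ⊢
  generalize (1 - p) * exp (-(p * x)) + p * exp ((1 - p) * x) = y at hy ⊢
  have hm0 : 0 ≤ |x| := abs_nonneg x
  have hpq0 : 0 ≤ p * (1 - p) := mul_nonneg hp0 (sub_nonneg.2 hp1)
  have hpq : p * (1 - p) ≤ 1 / 4 := by nlinarith [sq_nonneg (2 * p - 1)]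
  have hm3 : |x| ^ 3 ≤ |x| ^ 2 / 2 := by nlinarith
  have hy_upper : y - 1 ≤ 5 / 8 * |x| ^ 2 := by nlinarith
  have hy_lower : -(|x| ^ 2 / 2) ≤ y - 1 := by nlinarith
  have hy_sq : (y - 1) ^ 2 ≤ 25 / 64 * |x| ^ 4 := by nlinarith
  have hlog := abs_le.1 (abs_log_one_add_sub_self_le (t := y - 1) (by nlinarith))
  rw [add_sub_cancel] at hlog
  rw [abs_le]
  constructor <;> nlinarith

lemma abs_bernoulliCgf_sub_bernoulliCgf_neg_sub_le {x : ℝ} (hp0 : 0 ≤ p) (hp1 : p ≤ 1)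
    (hx : |x| ≤ 1 / 2) :
    |bernoulliCgf p x - bernoulliCgf p (-x) - 2 * p * x| ≤ 4 * |x| ^ 3 := by
  have h₁ := abs_bernoulliCgf_sub_taylor_le hp0 hp1 hx
  have h₂ := abs_bernoulliCgf_sub_taylor_le hp0 hp1 (x := -x) (by rwa [abs_neg])
  rw [abs_neg, neg_sq] at h₂
  calc _ = |(bernoulliCgf p x - p * x - p * (1 - p) * x ^ 2 / 2)
          - (bernoulliCgf p (-x) - p * -x - p * (1 - p) * x ^ 2 / 2)| := by congr 1; ring
    _ ≤ 4 * |x| ^ 3 := (abs_sub _ _).trans (by linarith)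

end bernoulliCgf

lemma integral_bernoulli_toMeasure {p : ℝ} (hp0 : 0 ≤ p) (hp1 : p ≤ 1) (f : Bool → ℝ) :
    ∫ b, f b ∂(PMF.bernoulli (min 1 (Real.toNNReal p)) (min_le_left _ _)).toMeasure
      = (1 - p) * f false + p * f true := by
  have hmin : min 1 (Real.toNNReal p) = Real.toNNReal p :=
    min_eq_right (Real.toNNReal_le_one.mpr hp1)
  have hcompl : ((1 : ENNReal) - Real.toNNReal p).toReal = 1 - p := by
    rw [ENNReal.toReal_sub_of_le (by exact_mod_cast Real.toNNReal_le_one.mpr hp1)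
      ENNReal.one_ne_top]
    simp [hp0]
  rw [PMF.integral_eq_sum, Fintype.sum_bool]
  simp only [PMF.bernoulli_apply, Bool.cond_true, Bool.cond_false, hmin]
  simp [hp0, hcompl]
  ring

lemma integral_exp_neg_mul_hamil {N : ℕ} {p : ℝ} (hp0 : 0 ≤ p) (hp1 : p ≤ 1) (β : ℝ)
    (σ : Fin N → Bool) :
    ∫ ω, exp (-β * hamil N p ω σ) ∂(bern N p)
      = ∏ c : Fin N × Fin N,
          (1 - p + p * exp (β / (2 * N * p) * (spin (σ c.1) * spin (σ c.2)))) := by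
  have hfactor : ∀ ω : Fin N × Fin N → Bool, exp (-β * hamil N p ω σ)
      = ∏ c, exp (β / (2 * N * p) * ((if ω c then 1 else 0) * (spin (σ c.1) * spin (σ c.2)))) := by
    intro ω
    rw [← exp_sum, hamil, Fintype.sum_prod_type]
    simp only [mul_assoc, ← Finset.mul_sum]
    ring_nf
  simp_rw [hfactor]
  rw [bern, integral_fintype_prod_eq_prod fun (c : Fin N × Fin N) (b : Bool) =>
    exp (β / (2 * N * p) * ((if b then 1 else 0) * (spin (σ c.1) * spin (σ c.2))))]
  refine Finset.prod_congr rfl fun c _ => ?_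
  rw [integral_bernoulli_toMeasure hp0 hp1]
  simp

lemma spin_mul_spin_eq_one_or_eq_neg_one (a b : Bool) :
    spin a * spin b = 1 ∨ spin a * spin b = -1 := by
  cases a <;> cases b <;> simp [spin]

lemma sum_comp_spin_mul_spin {N : ℕ} (σ : Fin N → Bool) (g : ℝ → ℝ) :
    ∑ c : Fin N × Fin N, g (spin (σ c.1) * spin (σ c.2))
      = N ^ 2 * ((g 1 + g (-1)) / 2) + mag σ ^ 2 * ((g 1 - g (-1)) / 2) := by
  have hlinear : ∀ c : Fin N × Fin N, g (spin (σ c.1) * spin (σ c.2))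
      = (g 1 + g (-1)) / 2 + spin (σ c.1) * spin (σ c.2) * ((g 1 - g (-1)) / 2) := by
    intro c
    rcases spin_mul_spin_eq_one_or_eq_neg_one (σ c.1) (σ c.2) with h | h <;> rw [h] <;> ring
  have hmag : ∑ c : Fin N × Fin N, spin (σ c.1) * spin (σ c.2) = mag σ ^ 2 := by
    rw [Fintype.sum_prod_type, mag, sq, Finset.sum_mul_sum]
  simp_rw [hlinear]
  rw [Finset.sum_add_distrib, Finset.sum_const, ← Finset.sum_mul, hmag]
  simp [sq]

lemma log_integral_exp_neg_mul_hamil {N : ℕ} {p : ℝ} (hp0 : 0 ≤ p) (hp1 : p ≤ 1) (β : ℝ)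
    (σ : Fin N → Bool) :
    log (∫ ω, exp (-β * hamil N p ω σ) ∂(bern N p))
      = N ^ 2 * ((bernoulliCgf p (β / (2 * N * p)) + bernoulliCgf p (-(β / (2 * N * p)))) / 2)
        + mag σ ^ 2
          * ((bernoulliCgf p (β / (2 * N * p)) - bernoulliCgf p (-(β / (2 * N * p)))) / 2) := by
  rw [integral_exp_neg_mul_hamil hp0 hp1,
    log_prod fun c _ => (one_sub_add_mul_exp_pos hp0 hp1 _).ne']
  have h := sum_comp_spin_mul_spin σ fun s => bernoulliCgf p (β / (2 * N * p) * s)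
  simp only [mul_one, mul_neg_one] at h
  exact h

lemma abs_log_integral_exp_neg_mul_hamil_sub_le {N : ℕ} {p β : ℝ} (hN : 0 < N) (hp0 : 0 < p)
    (hp1 : p ≤ 1) (ha : |β / (2 * N * p)| ≤ 1 / 2) (σ : Fin N → Bool) :
    |log (∫ ω, exp (-β * hamil N p ω σ) ∂(bern N p))
        - (1 - p) * β ^ 2 / (8 * p) - β / (2 * N) * mag σ ^ 2|
      ≤ N ^ 2 * |β / (2 * N * p)| ^ 4 + 2 * mag σ ^ 2 * |β / (2 * N * p)| ^ 3 := by
  rw [log_integral_exp_neg_mul_hamil hp0.le hp1]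
  have hNpos : (0 : ℝ) < N := Nat.cast_pos.2 hN
  set a := β / (2 * N * p) with ha_def
  have heven := abs_bernoulliCgf_add_bernoulliCgf_neg_sub_le hp0.le hp1 (x := a) (by linarith)
  have hodd := abs_bernoulliCgf_sub_bernoulliCgf_neg_sub_le hp0.le hp1 ha
  have hconst : (1 - p) * β ^ 2 / (8 * p) = N ^ 2 / 2 * (p * (1 - p) * a ^ 2) := by
    rw [ha_def]; field_simp; ring
  have hlinear : β / (2 * N) = p * a := by
    rw [ha_def]; field_simp
  rw [hconst, hlinear]
  calc _ = |N ^ 2 / 2 * (bernoulliCgf p a + bernoulliCgf p (-a) - p * (1 - p) * a ^ 2)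
          + mag σ ^ 2 / 2 * (bernoulliCgf p a - bernoulliCgf p (-a) - 2 * p * a)| := by
        congr 1; ring
    _ ≤ N ^ 2 / 2 * (2 * a ^ 4) + mag σ ^ 2 / 2 * (4 * |a| ^ 3) := by
        refine (abs_add_le _ _).trans ?_
        rw [abs_mul, abs_mul, abs_of_nonneg (by positivity : (0 : ℝ) ≤ N ^ 2 / 2),
          abs_of_nonneg (by positivity : 0 ≤ mag σ ^ 2 / 2)]
        gcongr
    _ = N ^ 2 * |a| ^ 4 + 2 * mag σ ^ 2 * |a| ^ 3 := by
        rw [(by decide : Even 4).pow_abs]; ring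

theorem log_expectation_exp_H_const_p_general (β p : ℝ) (hp : p ∈ Set.Ioc (0 : ℝ) 1) :
    ∃ C : ℝ, ∀ᶠ N : ℕ in atTop, ∀ σ : Fin N → Bool,
      |Real.log (∫ ω, Real.exp (-β * hamil N p ω σ) ∂(bern N p))
          - (1 - p) * β ^ 2 / (8 * p) - β / (2 * N) * (mag σ) ^ 2|
        ≤ C / (N : ℝ) ^ 2 * ((mag σ) ^ 2 / N + 1) := by
  obtain ⟨hp0, hp1⟩ := hp
  set b := |β| / p
  refine ⟨b ^ 4 / 16 + b ^ 3 / 4, ?_⟩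
  filter_upwards [eventually_gt_atTop 0, tendsto_natCast_atTop_atTop.eventually_ge_atTop b]
    with N hN hbN σ
  have hNpos : (0 : ℝ) < N := Nat.cast_pos.2 hN
  have ha : |β / (2 * N * p)| = b / (2 * N) := by
    rw [abs_div, abs_of_pos (by positivity : (0 : ℝ) < 2 * N * p), div_div]
    ring
  have ha_le : |β / (2 * N * p)| ≤ 1 / 2 := by
    rw [ha, div_le_iff₀ (by positivity)]
    linarith
  refine (abs_log_integral_exp_neg_mul_hamil_sub_le hN hp0 hp1 ha_le σ).trans ?_
  rw [ha, ← sub_nonneg]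
  have hslack : (b ^ 4 / 16 + b ^ 3 / 4) / (N : ℝ) ^ 2 * (mag σ ^ 2 / N + 1)
      - (N ^ 2 * (b / (2 * N)) ^ 4 + 2 * mag σ ^ 2 * (b / (2 * N)) ^ 3)
      = b ^ 4 * mag σ ^ 2 / (16 * N ^ 3) + b ^ 3 / (4 * N ^ 2) := by
    field_simp
    ring
  rw [hslack]
  positivity

/-- **Remark 4.** For fixed `β > 0` and constant `p ∈ (0,1]`,
`log 𝔼 e^{-βH(σ)} = (1-p)β²/(8p) + β|σ|²/(2N) + O(1/N²)(|σ|²/N + 1)`, uniformly in `σ`. -/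
theorem log_expectation_exp_H_const_p (β p : ℝ) (hβ : 0 < β) (hp : p ∈ Set.Ioc (0 : ℝ) 1) :
    ∃ C : ℝ, ∀ᶠ N : ℕ in atTop, ∀ σ : Fin N → Bool,
      |Real.log (∫ ω, Real.exp (-β * hamil N p ω σ) ∂(bern N p))
          - (1 - p) * β ^ 2 / (8 * p) - β / (2 * N) * (mag σ) ^ 2|
        ≤ C / (N : ℝ) ^ 2 * ((mag σ) ^ 2 / N + 1) :=
  log_expectation_exp_H_const_p_general β p hp
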